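/- For the function g₁ : ℝ → ℝ ∪ {+∞} defined by g₁(0) = 0, g₁(x) = −1/x for 0 < x ≤ 1, and g₁(x) = +∞ otherwise, the (1,1,ℝ)-strong subdifferential of g₁ at 0 equals (−∞, −1/2]. -/

import Mathlib

/- On `(0, 1]` the function `g₁` is negative, so the strong-subdifferential inequality at `0`
says that `l y (ξ + (1/2 - l) y) ≤ 0` for all `y ∈ (0, 1]`, `l ∈ [0, 1]`; elsewhere it is trivial.
Taking `y = 1` and `l → 0` forces `ξ ≤ -1/2`, and conversely `ξ ≤ -1/2` gives
`ξ + (1/2 - l) y ≤ (y - 1)/2 - l y ≤ 0`. -/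

open RealInnerProductSpace Set Filter Topology

/-- The `(β, γ, K)`-strong subdifferential of `h : ℝ → EReal` at `x`. -/
def strongSubdiff (h : ℝ → EReal) (K : Set ℝ) (β γ : ℝ) (x : ℝ) : Set ℝ :=
  {ξ | ∀ y ∈ K, ∀ l ∈ Icc (0:ℝ) 1,
    h x + (((l / β) * (ξ * (y - x))
      + (l / 2) * (γ - l / β - l * γ) * ‖y - x‖ ^ 2 : ℝ) : EReal)
      ≤ max (h y) (h x)}

/-- `g₁(0) = 0`, `g₁(x) = −1/x` for `0 < x ≤ 1`, `g₁(x) = +∞` otherwise. -/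
noncomputable def g₁ : ℝ → EReal := fun x =>
  if x = 0 then 0 else if 0 < x ∧ x ≤ 1 then ((-1 / x : ℝ) : EReal) else ⊤

theorem mem_strongSubdiff_one_one_zero_iff {h : ℝ → EReal} (h0 : h 0 = 0) (ξ : ℝ) :
    ξ ∈ strongSubdiff h univ 1 1 0 ↔ ∀ y, ∀ l ∈ Icc (0:ℝ) 1,
      ((l * (ξ * y) + l / 2 * (1 - 2 * l) * y ^ 2 : ℝ) : EReal) ≤ max (h y) 0 := by
  simp only [strongSubdiff, mem_ofPred_eq, mem_univ, forall_const, h0, zero_add, sub_zero,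
    div_one, mul_one, Real.norm_eq_abs, sq_abs, two_mul, sub_add_eq_sub_sub]

theorem g₁_zero : g₁ 0 = 0 := if_pos rfl

theorem g₁_of_mem_Ioc {y : ℝ} (hy : y ∈ Ioc (0:ℝ) 1) : g₁ y = ((-1 / y : ℝ) : EReal) := by
  simp [g₁, hy.1.ne', hy.1, hy.2]

theorem g₁_of_ne_zero_of_notMem_Ioc {y : ℝ} (hy₀ : y ≠ 0) (hy : y ∉ Ioc (0:ℝ) 1) : g₁ y = ⊤ := by
  simp_all [g₁]

theorem max_g₁_zero_of_mem_Ioc {y : ℝ} (hy : y ∈ Ioc (0:ℝ) 1) : max (g₁ y) 0 = 0 := by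
  rw [g₁_of_mem_Ioc hy, max_eq_right]
  exact EReal.coe_nonpos.2 (div_nonpos_of_nonpos_of_nonneg (by norm_num) hy.1.le)

theorem mem_strongSubdiff_g₁_zero_iff (ξ : ℝ) :
    ξ ∈ strongSubdiff g₁ univ 1 1 0 ↔ ∀ y ∈ Ioc (0:ℝ) 1, ∀ l ∈ Icc (0:ℝ) 1,
      l * (ξ * y) + l / 2 * (1 - 2 * l) * y ^ 2 ≤ 0 := by
  rw [mem_strongSubdiff_one_one_zero_iff g₁_zero]
  refine forall_congr' fun y => ?_
  by_cases hy : y ∈ Ioc (0:ℝ) 1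
  · simp only [hy, true_implies, max_g₁_zero_of_mem_Ioc hy, EReal.coe_nonpos]
  · simp only [hy, false_implies, iff_true]
    rcases eq_or_ne y 0 with rfl | hy₀
    · simp [g₁_zero]
    · simp [g₁_of_ne_zero_of_notMem_Ioc hy₀ hy]

theorem quadratic_nonpos_on_unit_square_iff (ξ : ℝ) :
    (∀ y ∈ Ioc (0:ℝ) 1, ∀ l ∈ Icc (0:ℝ) 1, l * (ξ * y) + l / 2 * (1 - 2 * l) * y ^ 2 ≤ 0) ↔
      ξ ≤ -(1/2) := by
  constructor
  · intro h
    have hl : ∀ l ∈ Ioc (0:ℝ) 1, ξ ≤ l - 1/2 := fun l hl => by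
      have h1 := h 1 ⟨one_pos, le_rfl⟩ l (Ioc_subset_Icc_self hl)
      have : (ξ + 1/2 - l) * l ≤ 0 := by linarith
      linarith [nonpos_of_mul_nonpos_left this hl.1]
    refine le_of_forall_pos_le_add fun ε hε => ?_
    linarith [hl (min ε 1) ⟨lt_min hε one_pos, min_le_right ε 1⟩, min_le_left ε 1]
  · rintro hξ y ⟨hy₀, hy₁⟩ l ⟨hl₀, hl₁⟩
    have hly : 0 ≤ l * y := mul_nonneg hl₀ hy₀.le
    calc l * (ξ * y) + l / 2 * (1 - 2 * l) * y ^ 2 = (l * y) * (ξ + (1/2 - l) * y) := by ring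
      _ ≤ 0 := mul_nonpos_of_nonneg_of_nonpos hly (by nlinarith)

theorem strongSubdiff_g₁_eq_Iic :
    strongSubdiff g₁ Set.univ 1 1 0 = Set.Iic (-(1/2) : ℝ) := by
  ext ξ
  rw [mem_strongSubdiff_g₁_zero_iff, quadratic_nonpos_on_unit_square_iff, mem_Iic]
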